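/- arXiv:2206.03435 — 6 statements merged into one kernel-verified Lean document; each statement's English description precedes it below -/
import Mathlib

section
/- (C-equations) Let k, m, n be nonnegative integers with k+m ≤ n, let Z be an arbitrary n×(k+m) real matrix, let C be a k×n matrix and Y = CZ. Then for any (k−1)-element subset A of [n] and any (m−1)-element subset B of [n], we have ∑_{i=1}^{n} p_{A∪{i}}(C) · ⟨Y, B, i⟩ = 0, where p_{A∪{i}}(C) denotes the minor of C on columns A followed by i (in that order, so it is the signed minor), and ⟨Y, B, i⟩ is the twistor coordinate determinant of (rows of Y, Z_b for b∈B in order, Z_i). -/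
/-- The twistor coordinate: determinant of the matrix whose first `k` rows are those of `Y`
and whose last `m` rows are the rows `Z_{L b}` of `Z`. -/
noncomputable def twistor {k m n : ℕ} (Z : Matrix (Fin n) (Fin (k + m)) ℝ)
    (Y : Matrix (Fin k) (Fin (k + m)) ℝ) (L : Fin m → Fin n) : ℝ :=
  Matrix.det (Matrix.of fun i j : Fin k ⊕ Fin m =>
    Sum.elim (fun a => Y a) (fun b => Z (L b)) i (finSumFinEquiv j))

/-- The minor of `C` on the (ordered) list of columns `J`. -/
noncomputable def minor {k n : ℕ} (C : Matrix (Fin k) (Fin n) ℝ) (J : Fin k → Fin n) : ℝ :=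
  Matrix.det (Matrix.of fun a b => C a (J b))

/-- The `C`-equations: for any `(k-1)`-subset `A` (given as a strictly increasing list) and
`(m-1)`-subset `B` of `[n]`, `∑_{i=1}^n p_{A,i}(C) ⟨Y, B, i⟩ = 0`, where `Y = C Z`.
Here the sizes are `k = k'+1`, `m = m'+1`. -/
theorem stmt1 (k m n : ℕ) (hmn : (k + 1) + (m + 1) ≤ n)
    (Z : Matrix (Fin n) (Fin ((k + 1) + (m + 1))) ℝ)
    (C : Matrix (Fin (k + 1)) (Fin n) ℝ)
    (A : Fin k → Fin n) (hA : StrictMono A)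
    (B : Fin m → Fin n) (hB : StrictMono B) :
    ∑ i : Fin n, minor C (Fin.snoc A i) * twistor Z (C * Z) (Fin.snoc B i) = 0 := by
  classical
  set Y := C * Z with hY
  -- base matrices with a junk last row/column
  set M₀ : Matrix (Fin (k+1) ⊕ Fin (m+1)) (Fin (k+1) ⊕ Fin (m+1)) ℝ :=
    Matrix.of fun p q =>
      Sum.elim (fun a => Y a) ((Fin.snoc (fun b : Fin m => Z (B b)) (0 : Fin ((k+1)+(m+1)) → ℝ) : Fin (m+1) → Fin ((k+1)+(m+1)) → ℝ)) p (finSumFinEquiv q) with hM₀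
  set M₁ : Matrix (Fin (k+1)) (Fin (k+1)) ℝ :=
    Matrix.of fun a b => (Fin.snoc (fun b' : Fin k => C a (A b')) (0:ℝ) : Fin (k+1) → ℝ) b with hM₁
  -- F : linear in the last twistor row
  set F : (Fin ((k+1)+(m+1)) → ℝ) →ₗ[ℝ] ℝ :=
    { toFun := fun w =>
        (M₀.updateRow (Sum.inr (Fin.last m)) (fun q => w (finSumFinEquiv q))).det
      map_add' := by
        intro u v
        rw [← Matrix.det_updateRow_add]
        rfl
      map_smul' := by
        intro c u
        rw [RingHom.id_apply, smul_eq_mul, ← Matrix.det_updateRow_smul]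
        rfl } with hF
  -- G : linear in the last minor column
  set G : (Fin (k+1) → ℝ) →ₗ[ℝ] ℝ :=
    { toFun := fun v => (M₁.updateCol (Fin.last k) v).det
      map_add' := by
        intro u v
        rw [← Matrix.det_updateCol_add]
      map_smul' := by
        intro c u
        rw [RingHom.id_apply, smul_eq_mul, ← Matrix.det_updateCol_smul] } with hG
  have h1 : ∀ i : Fin n, twistor Z Y (Fin.snoc B i) = F (Z i) := by
    intro i
    show _ = Matrix.det _
    unfold twistor
    congr 1
    ext p q
    rcases p with a | b
    · simp [Matrix.updateRow_apply, hM₀]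
    · refine Fin.lastCases ?_ ?_ b
      · simp [Matrix.updateRow_apply, hM₀]
      · intro c
        have hne : (Sum.inr (Fin.castSucc c) : Fin (k+1) ⊕ Fin (m+1)) ≠ Sum.inr (Fin.last m) := by
          simp [Fin.ne_of_lt (Fin.castSucc_lt_last c)]
        simp [Matrix.updateRow_apply, hM₀, hne, Fin.snoc_castSucc]
  have h2 : ∀ i : Fin n, minor C (Fin.snoc A i) = G (fun a => C a i) := by
    intro i
    show _ = Matrix.det _
    unfold minor
    congr 1
    ext a b
    refine Fin.lastCases ?_ ?_ b
    · simp [Matrix.updateCol_apply, hM₁]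
    · intro c
      have hne : (Fin.castSucc c : Fin (k+1)) ≠ Fin.last k :=
        Fin.ne_of_lt (Fin.castSucc_lt_last c)
      simp [Matrix.updateCol_apply, hM₁, hne, Fin.snoc_castSucc]
  have h3 : ∀ a : Fin (k+1), F (Y a) = 0 := by
    intro a
    show Matrix.det _ = 0
    apply Matrix.det_zero_of_row_eq (i := Sum.inl a) (j := Sum.inr (Fin.last m))
    · simp
    · rw [Matrix.updateRow_ne (by simp), Matrix.updateRow_self]
      rfl
  have hGexp : ∀ v : Fin (k+1) → ℝ, G v = ∑ a : Fin (k+1), v a * G (Pi.single a 1) := by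
    intro v
    conv_lhs => rw [pi_eq_sum_univ v]
    rw [map_sum]
    refine Finset.sum_congr rfl fun a _ => ?_
    rw [map_smul, smul_eq_mul]
    have hs : (fun j => if a = j then (1:ℝ) else 0) = Pi.single a 1 := by
      funext j
      simp [Pi.single_apply, eq_comm]
    rw [hs]
  have key : ∀ a : Fin (k+1), ∑ i : Fin n, C a i * F (Z i) = F (Y a) := by
    intro a
    have hYa : Y a = ∑ i : Fin n, C a i • Z i := by
      funext j
      simp [hY, Matrix.mul_apply, Finset.sum_apply]
    rw [hYa, map_sum]
    refine Finset.sum_congr rfl fun i _ => ?_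
    rw [map_smul, smul_eq_mul]
  calc ∑ i : Fin n, minor C (Fin.snoc A i) * twistor Z Y (Fin.snoc B i)
      = ∑ i : Fin n, ∑ a : Fin (k+1), (C a i * G (Pi.single a 1)) * F (Z i) := by
        refine Finset.sum_congr rfl fun i _ => ?_
        rw [h1, h2, hGexp, Finset.sum_mul]
    _ = ∑ a : Fin (k+1), ∑ i : Fin n, (C a i * G (Pi.single a 1)) * F (Z i) :=
        Finset.sum_comm
    _ = ∑ a : Fin (k+1), G (Pi.single a 1) * ∑ i : Fin n, C a i * F (Z i) := by
        refine Finset.sum_congr rfl fun a _ => ?_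
        rw [Finset.mul_sum]
        exact Finset.sum_congr rfl fun i _ => by ring
    _ = 0 := by
        refine Finset.sum_eq_zero fun a _ => ?_
        rw [key, h3, mul_zero]
end

section
/- Let m = 2r−1 be an odd positive integer and k a positive integer, n = k+m. The number of sequences (i_1,...,i_r) of integers with 1 ≤ i_1 < i_2 < ... < i_r ≤ n−1 with i_{j+1} ≥ i_j + 2 for all j and i_1 ≡ i_2 ≡ ... ≡ i_r (mod 2), equals ((2k+m−1)/(m+1)) · C((k+m−2)/2, (m−1)/2) if k is odd, and 2·C((k+m−1)/2, (m+1)/2) if k is even. -/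
private def sumOfOr {α : Type*} (p q : α → Prop) [DecidablePred p] (h : ∀ x, ¬(p x ∧ q x)) :
    {x // p x ∨ q x} ≃ {x // p x} ⊕ {x // q x} where
  toFun x := if hp : p x.1 then .inl ⟨x.1, hp⟩ else .inr ⟨x.1, x.2.resolve_left hp⟩
  invFun y := y.elim (fun a => ⟨a.1, .inl a.2⟩) (fun a => ⟨a.1, .inr a.2⟩)
  left_inv x := by rcases x with ⟨x, hx⟩; by_cases hp : p x <;> simp [hp]
  right_inv y := by
    rcases y with a | a
    · simp [a.2]
    · have : ¬ p a.1 := fun hp => h a.1 ⟨hp, a.2⟩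
      simp [this]

private noncomputable def strictMonoEquiv (S : Finset ℕ) (r : ℕ) :
    {f : Fin r → ℕ // StrictMono f ∧ ∀ j, f j ∈ S} ≃ (S.powersetCard r : Finset (Finset ℕ)) where
  toFun f := ⟨Finset.image f.1 Finset.univ, by
    rw [Finset.mem_powersetCard]
    refine ⟨fun x hx => ?_, ?_⟩
    · obtain ⟨i, _, rfl⟩ := Finset.mem_image.1 hx
      exact f.2.2 i
    · rw [Finset.card_image_of_injective _ f.2.1.injective, Finset.card_univ,
        Fintype.card_fin]⟩
  invFun s := ⟨s.1.orderEmbOfFin (Finset.mem_powersetCard.1 s.2).2,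
    (s.1.orderEmbOfFin (Finset.mem_powersetCard.1 s.2).2).strictMono,
    fun j => (Finset.mem_powersetCard.1 s.2).1 (s.1.orderEmbOfFin_mem _ j)⟩
  left_inv f := by
    apply Subtype.ext
    exact (Finset.orderEmbOfFin_unique _ (fun x => Finset.mem_image_of_mem _ (Finset.mem_univ x))
      f.2.1).symm
  right_inv s := by
    apply Subtype.ext
    apply Finset.coe_injective
    rw [Finset.coe_image, Finset.coe_univ, Set.image_univ]
    exact Finset.range_orderEmbOfFin _ _

private theorem card_strictMono (S : Finset ℕ) (r : ℕ) :
    Nat.card {f : Fin r → ℕ // StrictMono f ∧ ∀ j, f j ∈ S} = S.card.choose r := by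
  rw [Nat.card_congr (strictMonoEquiv S r), Nat.card_eq_fintype_card,
    Fintype.card_coe, Finset.card_powersetCard]

private theorem card_odds (n : ℕ) :
    ((Finset.range n).filter (fun x => x % 2 = 1)).card = n / 2 := by
  have : (Finset.range n).filter (fun x => x % 2 = 1)
      = (Finset.range (n / 2)).image (fun j => 2 * j + 1) := by
    ext x
    simp only [Finset.mem_filter, Finset.mem_range, Finset.mem_image]
    constructor
    · rintro ⟨h1, h2⟩; exact ⟨x / 2, by omega, by omega⟩
    · rintro ⟨j, hj, rfl⟩; omega
  rw [this, Finset.card_image_of_injective _ (fun a b h => by omega), Finset.card_range]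

private theorem card_evens (n : ℕ) :
    ((Finset.range n).filter (fun x => x % 2 = 0 ∧ 1 ≤ x)).card = (n - 1) / 2 := by
  have : (Finset.range n).filter (fun x => x % 2 = 0 ∧ 1 ≤ x)
      = (Finset.range ((n - 1) / 2)).image (fun j => 2 * j + 2) := by
    ext x
    simp only [Finset.mem_filter, Finset.mem_range, Finset.mem_image]
    constructor
    · rintro ⟨h1, h2, h3⟩; exact ⟨x / 2 - 1, by omega, by omega⟩
    · rintro ⟨j, hj, rfl⟩; omega
  rw [this, Finset.card_image_of_injective _ (fun a b h => by omega), Finset.card_range]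

private theorem main_count (n r : ℕ) (hr : 0 < r) (hn : 1 ≤ n) :
    Nat.card {f : Fin r → ℕ //
        StrictMono f ∧
        (∀ j, 1 ≤ f j ∧ f j ≤ n - 1) ∧
        (∀ i j : Fin r, (i : ℕ) + 1 = (j : ℕ) → f i + 2 ≤ f j) ∧
        (∀ i j, f i % 2 = f j % 2)} = (n / 2).choose r + ((n - 1) / 2).choose r := by
  set So : Finset ℕ := (Finset.range n).filter (fun x => x % 2 = 1) with hSo
  set Se : Finset ℕ := (Finset.range n).filter (fun x => x % 2 = 0 ∧ 1 ≤ x) with hSe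
  set Qo : (Fin r → ℕ) → Prop := fun f => StrictMono f ∧ ∀ j, f j ∈ So with hQo
  set Qe : (Fin r → ℕ) → Prop := fun f => StrictMono f ∧ ∀ j, f j ∈ Se with hQe
  have key : ∀ f : Fin r → ℕ,
      (StrictMono f ∧ (∀ j, 1 ≤ f j ∧ f j ≤ n - 1) ∧
        (∀ i j : Fin r, (i : ℕ) + 1 = (j : ℕ) → f i + 2 ≤ f j) ∧
        (∀ i j, f i % 2 = f j % 2)) ↔ (Qo f ∨ Qe f) := by
    intro f
    constructor
    · rintro ⟨hsm, hb, hgap, hpar⟩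
      by_cases h0 : f ⟨0, hr⟩ % 2 = 1
      · left
        refine ⟨hsm, fun j => ?_⟩
        have h1 := hb j
        have h2 := hpar j ⟨0, hr⟩
        simp only [hSo, Finset.mem_filter, Finset.mem_range]
        omega
      · right
        refine ⟨hsm, fun j => ?_⟩
        have h1 := hb j
        have h2 := hpar j ⟨0, hr⟩
        simp only [hSe, Finset.mem_filter, Finset.mem_range]
        omega
    · rintro (⟨hsm, hmem⟩ | ⟨hsm, hmem⟩) <;>
      · refine ⟨hsm, fun j => ?_, fun i j hij => ?_, fun i j => ?_⟩
        · have h1 := hmem j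
          simp only [hSo, hSe, Finset.mem_filter, Finset.mem_range] at h1
          omega
        · have h1 := hmem i
          have h2 := hmem j
          have h3 : f i < f j := hsm (by omega : i < j)
          simp only [hSo, hSe, Finset.mem_filter, Finset.mem_range] at h1 h2
          omega
        · have h1 := hmem i
          have h2 := hmem j
          simp only [hSo, hSe, Finset.mem_filter, Finset.mem_range] at h1 h2
          omega
  have hdisj : ∀ f : Fin r → ℕ, ¬(Qo f ∧ Qe f) := by
    rintro f ⟨⟨_, ho⟩, ⟨_, he⟩⟩
    have h1 := ho ⟨0, hr⟩
    have h2 := he ⟨0, hr⟩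
    simp only [hSo, hSe, Finset.mem_filter, Finset.mem_range] at h1 h2
    omega
  classical
  rw [Nat.card_congr (Equiv.subtypeEquivRight key), Nat.card_congr (sumOfOr Qo Qe hdisj)]
  have fo : Finite {f // Qo f} := Finite.of_equiv _ (strictMonoEquiv So r).symm
  have fe : Finite {f // Qe f} := Finite.of_equiv _ (strictMonoEquiv Se r).symm
  rw [Nat.card_sum, card_strictMono So r, card_strictMono Se r, card_odds, card_evens]

/-- For `m = 2r−1` odd, `k ≥ 1`, `n = k+m`: the number of sequences
`1 ≤ i_1 < … < i_r ≤ n−1` with `i_{j+1} ≥ i_j + 2` and all `i_j` of the same parity equals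
`((2k+m−1)/(m+1))·C((k+m−2)/2,(m−1)/2)` for `k` odd (stated multiplied through by `m+1`),
and `2·C((k+m−1)/2,(m+1)/2)` for `k` even. -/
theorem stmt5 (k m n : ℕ) (hm : Odd m) (hk : 0 < k) (hn : n = k + m) :
    (Odd k →
      (m + 1) * Nat.card {f : Fin ((m + 1) / 2) → ℕ //
          StrictMono f ∧
          (∀ j, 1 ≤ f j ∧ f j ≤ n - 1) ∧
          (∀ i j : Fin ((m + 1) / 2), (i : ℕ) + 1 = (j : ℕ) → f i + 2 ≤ f j) ∧
          (∀ i j, f i % 2 = f j % 2)} =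
        (2 * k + m - 1) * Nat.choose ((k + m - 2) / 2) ((m - 1) / 2)) ∧
    (Even k →
      Nat.card {f : Fin ((m + 1) / 2) → ℕ //
          StrictMono f ∧
          (∀ j, 1 ≤ f j ∧ f j ≤ n - 1) ∧
          (∀ i j : Fin ((m + 1) / 2), (i : ℕ) + 1 = (j : ℕ) → f i + 2 ≤ f j) ∧
          (∀ i j, f i % 2 = f j % 2)} =
        2 * Nat.choose ((k + m - 1) / 2) ((m + 1) / 2)) := by
  obtain ⟨t, rfl⟩ := hm
  have hr : 0 < (2 * t + 1 + 1) / 2 := by omega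
  have hn1 : 1 ≤ n := by omega
  have hcount := main_count n ((2 * t + 1 + 1) / 2) hr hn1
  constructor
  · rintro ⟨a, rfl⟩
    rw [hcount]; clear hcount
    have h1 : n / 2 = a + t + 1 := by omega
    have h2 : (n - 1) / 2 = a + t := by omega
    have h3 : (2 * t + 1 + 1) / 2 = t + 1 := by omega
    have h4 : (2 * a + 1 + (2 * t + 1) - 2) / 2 = a + t := by omega
    have h5 : (2 * t + 1 - 1) / 2 = t := by omega
    have h6 : 2 * (2 * a + 1) + (2 * t + 1) - 1 = 4 * a + 2 * t + 2 := by omega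
    rw [h1, h2, h3, h4, h5, h6]
    -- (2t+2) * (C(a+t+1,t+1) + C(a+t,t+1)) = (4a+2t+2) * C(a+t,t)
    have e1 : (t + 1) * (a + t + 1).choose (t + 1) = (a + t + 1) * (a + t).choose t := by
      have h := Nat.add_one_mul_choose_eq (a + t) t
      linarith
    have e2 : (t + 1) * (a + t).choose (t + 1) = a * (a + t).choose t := by
      have h2 := Nat.choose_succ_right_eq (a + t) t
      have h : a + t - t = a := by omega
      rw [h] at h2
      linarith
    have : (2 * t + 1 + 1) * ((a + t + 1).choose (t + 1) + (a + t).choose (t + 1))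
        = 2 * ((t + 1) * (a + t + 1).choose (t + 1)) + 2 * ((t + 1) * (a + t).choose (t + 1)) := by
      ring
    rw [this, e1, e2]
    ring
  · rintro ⟨a, rfl⟩
    rw [hcount]; clear hcount
    have ha : 1 ≤ a := by omega
    have h1 : n / 2 = a + t := by omega
    have h2 : (n - 1) / 2 = a + t := by omega
    have h3 : (2 * t + 1 + 1) / 2 = t + 1 := by omega
    have h4 : (a + a + (2 * t + 1) - 1) / 2 = a + t := by omega
    rw [h1, h2, h3, h4]
    ring
end

section
/- Let k, m, n be nonnegative integers with k+m ≤ n and let Z be an n×(k+m) real matrix all of whose maximal (k+m)×(k+m) minors are positive, and let C be a k×n matrix all of whose maximal k×k minors are positive. Let Y = CZ. Then for every even m and every list I = (i_1, i_1+1, ..., i_{m/2}, i_{m/2}+1) of m strictly increasing integers in [n], the twistor coordinate ⟨Y, I⟩ is strictly positive. -/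
/-- All maximal `p × p` minors of the `n × p` matrix `Z` (rows selected by a strictly
increasing list) are positive. -/
def PosMaximalMinors {n p : ℕ} (Z : Matrix (Fin n) (Fin p) ℝ) : Prop :=
  ∀ f : Fin p → Fin n, StrictMono f → 0 < Matrix.det (Matrix.of fun a b => Z (f a) b)

/-- All maximal `k × k` minors of the `k × n` matrix `C` (columns selected by a strictly
increasing list) are positive. -/
def PosRowMinors {k n : ℕ} (C : Matrix (Fin k) (Fin n) ℝ) : Prop :=
  ∀ g : Fin k → Fin n, StrictMono g → 0 < Matrix.det (Matrix.of fun a b => C a (g b))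

/-- The list `I` consists of consecutive pairs: the entry at each odd position is the
successor of the entry at the preceding even position. -/
def ConsecPairs {m n : ℕ} (I : Fin m → Fin n) : Prop :=
  ∀ a b : Fin m, (a : ℕ) + 1 = (b : ℕ) → (a : ℕ) % 2 = 0 → (I b : ℕ) = (I a : ℕ) + 1

/-!
Expanding the first `k` rows of `⟨CZ, I⟩ = det [CZ; Z_I]` multilinearly gives the
Cauchy–Binet sum `∑_g det C_g · det [Z_g; Z_I]` over increasing `g : [k] → [n]`. The factor
`det [Z_g; Z_I]` vanishes when `g` meets `I`; otherwise it is a maximal minor of `Z` times the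
sign of the permutation sorting the rows. The inversions of that permutation are the pairs
`(g a, I t)` with `I t < g a`, and since `g a` never separates a consecutive pair
`i, i + 1` of `I`, they come in pairs, so the sign is `+1`. Every term is therefore
nonnegative, and the term of an increasing `g` avoiding `I` (which exists as `k + m ≤ n`)
is positive.
-/

open Finset

open Classical in
theorem sum_injective_eq_sum_strictMono_sum_perm {ι β : Type*} [Fintype ι] [LinearOrder ι]
    [AddCommMonoid β] {k : ℕ} (F : (Fin k → ι) → β) :
    ∑ h ∈ univ.filter Function.Injective, F h =
      ∑ g ∈ univ.filter (StrictMono : (Fin k → ι) → Prop), ∑ σ : Equiv.Perm (Fin k),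
        F (g ∘ σ) := by
  rw [← sum_product']
  have hsort : ∀ g : Fin k → ι, StrictMono g → ∀ σ : Equiv.Perm (Fin k),
      (g ∘ σ) ∘ Tuple.sort (g ∘ σ) = g := fun g hg σ => by
    rw [Tuple.comp_perm_comp_sort_eq_comp_sort, Tuple.sort_eq_refl_iff_monotone.2 hg.monotone]
    rfl
  symm
  refine sum_nbij' (fun p => p.1 ∘ p.2) (fun h => (h ∘ Tuple.sort h, (Tuple.sort h)⁻¹))
    ?_ ?_ ?_ ?_ fun _ _ => rfl
  · simp only [mem_product, mem_filter, mem_univ, true_and, and_true]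
    exact fun p hp => hp.injective.comp p.2.injective
  · simp only [mem_product, mem_filter, mem_univ, true_and, and_true]
    exact fun h hh => (Tuple.monotone_sort h).strictMono_of_injective (hh.comp (Equiv.injective _))
  · simp only [mem_product, mem_filter, mem_univ, true_and, and_true]
    rintro ⟨g, σ⟩ hg
    have h := hsort g hg σ
    refine Prod.ext h ?_
    rw [inv_eq_iff_eq_inv]
    ext1 a
    exact Equiv.Perm.eq_inv_iff_eq.2 (hg.injective (congrFun h a))
  · intro h _
    ext a
    simp

namespace AlternatingMap

variable {R M N : Type*}

def fixInr {ι ι' : Type*} [Semiring R] [AddCommMonoid M] [Module R M] [AddCommMonoid N]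
    [Module R N] (f : M [⋀^(ι ⊕ ι')]→ₗ[R] N) (u : ι' → M) : M [⋀^ι]→ₗ[R] N where
  toFun w := f (Sum.elim w u)
  map_update_add' w i x y := by
    classical
    simp only [← Sum.update_elim_inl, f.map_update_add]
  map_update_smul' w i c x := by
    classical
    simp only [← Sum.update_elim_inl, f.map_update_smul]
  map_eq_zero_of_eq' w i j hij hne :=
    f.map_eq_zero_of_eq (Sum.elim w u) (i := .inl i) (j := .inl j) hij (by simpa using hne)

/-- Cauchy–Binet for alternating maps. -/
theorem map_sum_smul_eq_sum_det_smul [CommRing R] [AddCommMonoid M] [Module R M]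
    [AddCommGroup N] [Module R N] {ι : Type*} [Fintype ι] [LinearOrder ι] {k : ℕ}
    (f : M [⋀^Fin k]→ₗ[R] N) (C : Matrix (Fin k) ι R) (v : ι → M) :
    open Classical in
    f (fun a => ∑ x, C a x • v x) =
      ∑ g ∈ univ.filter (StrictMono : (Fin k → ι) → Prop), (C.submatrix id g).det • f (v ∘ g) := by
  have hexpand :
      f (fun a => ∑ x, C a x • v x) = ∑ h : Fin k → ι, (∏ a, C a (h a)) • f (v ∘ h) := by
    rw [← f.coe_multilinearMap, MultilinearMap.map_sum]
    simp only [MultilinearMap.map_smul_univ]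
    rfl
  have hinj_of_ne_zero : ∀ h : Fin k → ι, (∏ a, C a (h a)) • f (v ∘ h) ≠ 0 → h.Injective := by
    intro h hne
    by_contra hh
    exact hne (by rw [f.map_eq_zero_of_not_injective _ fun hvh => hh hvh.of_comp, smul_zero])
  have hdet : ∀ g : Fin k → ι,
      ∑ σ : Equiv.Perm (Fin k), (∏ a, C a (g (σ a))) • f (v ∘ g ∘ σ) =
        (C.submatrix id g).det • f (v ∘ g) := by
    intro g
    rw [← Matrix.det_transpose, Matrix.det_apply, sum_smul]
    refine sum_congr rfl fun σ _ => ?_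
    rw [← Function.comp_assoc, f.map_perm, smul_comm, smul_assoc]
    rfl
  rw [hexpand, ← sum_filter_of_ne fun h _ => hinj_of_ne_zero h,
    sum_injective_eq_sum_strictMono_sum_perm]
  exact sum_congr rfl fun g _ => hdet g

end AlternatingMap

theorem Fin.prod_eq_one_of_pairs {β : Type*} [CommMonoid β] {m : ℕ} (hm : Even m)
    (f : Fin m → β) (hf : ∀ a b : Fin m, (a : ℕ) + 1 = b → (a : ℕ) % 2 = 0 → f a * f b = 1) :
    ∏ t, f t = 1 := by
  obtain ⟨r, rfl⟩ := hm
  let e : Fin r × Fin 2 ≃ Fin (r + r) := finProdFinEquiv.trans (finCongr (by omega))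
  rw [← e.prod_comp, Fintype.prod_prod_type]
  refine prod_eq_one fun q _ => ?_
  rw [Fin.prod_univ_two]
  exact hf _ _ (by simp [e, add_comm]) (by simp [e])

theorem Tuple.sign_sort_eq_prod_inversions {α : Type*} [LinearOrder α] {p : ℕ} {F : Fin p → α}
    (hF : F.Injective) :
    (Tuple.sort F).sign = ∏ j, ∏ i, if i < j ∧ F j < F i then -1 else 1 := by
  have hmono : StrictMono (F ∘ Tuple.sort F) :=
    (Tuple.monotone_sort F).strictMono_of_injective (hF.comp (Equiv.injective _))
  have hlt : ∀ i j, (Tuple.sort F)⁻¹ i < (Tuple.sort F)⁻¹ j ↔ F i < F j := fun i j => by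
    simpa using (hmono.lt_iff_lt (a := (Tuple.sort F)⁻¹ i) (b := (Tuple.sort F)⁻¹ j)).symm
  rw [← Equiv.Perm.sign_inv, Equiv.Perm.sign_eq_prod_prod_Iio]
  refine prod_congr rfl fun j _ => ?_
  simp only [ite_and, hlt]
  rw [← prod_filter, filter_gt_eq_Iio]
  refine prod_congr rfl fun i hi => ?_
  have hne : F i ≠ F j := hF.ne (mem_Iio.1 hi).ne
  split_ifs <;> first | rfl | order

theorem Tuple.sign_sort_append {α : Type*} [LinearOrder α] {k m : ℕ} {g : Fin k → α}
    {I : Fin m → α} (hg : StrictMono g) (hI : StrictMono I) (hinj : (Fin.append g I).Injective) :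
    (Tuple.sort (Fin.append g I)).sign = ∏ a, ∏ t, if I t < g a then -1 else 1 := by
  have hcross : ∀ (a : Fin k) (t : Fin m), Fin.castAdd m a < Fin.natAdd k t := fun a t => by
    simp only [Fin.lt_def, Fin.val_castAdd, Fin.val_natAdd]
    omega
  have hcast : ∀ a b : Fin k, Fin.castAdd m a < Fin.castAdd m b ↔ a < b := fun _ _ => Iff.rfl
  have hasymm : ∀ {p : ℕ} (i j : Fin p), ¬(i < j ∧ j < i) := fun _ _ h => lt_asymm h.1 h.2
  rw [Tuple.sign_sort_eq_prod_inversions hinj, prod_comm]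
  simp [Fin.prod_univ_add, hg.lt_iff_lt, hI.lt_iff_lt, hcross, (hcross _ _).not_gt, hcast,
    hasymm]

theorem exists_strictMono_forall_ne {ι : Type*} [Fintype ι] [LinearOrder ι] {k m : ℕ}
    {I : Fin m → ι} (hI : I.Injective) (hcard : k + m ≤ Fintype.card ι) :
    ∃ g : Fin k → ι, StrictMono g ∧ ∀ a t, g a ≠ I t := by
  classical
  set s : Finset ι := univ \ univ.image I
  have hk : k ≤ s.card := by
    rw [card_sdiff_of_subset (subset_univ _), card_image_of_injective _ hI, card_univ, card_univ,
      Fintype.card_fin]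
    omega
  refine ⟨s.orderEmbOfCardLe hk, (s.orderEmbOfCardLe hk).strictMono, fun a t h => ?_⟩
  have hmem := s.orderEmbOfCardLe_mem hk a
  simp only [s, mem_sdiff, mem_univ, mem_image, true_and, not_exists] at hmem
  exact hmem t h.symm

theorem ConsecPairs.prod_ite_lt_eq_one {m n : ℕ} {I : Fin m → Fin n} (hpair : ConsecPairs I)
    (hm : Even m) {x : Fin n} (hx : ∀ t, x ≠ I t) :
    ∏ t, (if I t < x then -1 else 1 : ℤˣ) = 1 := by
  refine Fin.prod_eq_one_of_pairs hm _ fun a b hab ha => ?_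
  have hsucc := hpair a b hab ha
  have hxa := Fin.val_ne_of_ne (hx a)
  have hxb := Fin.val_ne_of_ne (hx b)
  have hiff : I a < x ↔ I b < x := by
    simp only [Fin.lt_def]
    omega
  rw [if_congr hiff rfl rfl]
  exact Int.units_mul_self _

theorem ConsecPairs.sign_sort_append_eq_one {k m n : ℕ} {g : Fin k → Fin n} {I : Fin m → Fin n}
    (hpair : ConsecPairs I) (hm : Even m) (hg : StrictMono g) (hI : StrictMono I)
    (hdisj : ∀ a t, g a ≠ I t) : (Tuple.sort (Fin.append g I)).sign = 1 := by
  rw [Tuple.sign_sort_append hg hI (Fin.append_injective_iff.2 ⟨hg.injective, hI.injective, hdisj⟩)]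
  exact prod_eq_one fun a _ => hpair.prod_ite_lt_eq_one hm (hdisj a)

theorem PosMaximalMinors.det_rows_pos {n p : ℕ} {Z : Matrix (Fin n) (Fin p) ℝ}
    (hZ : PosMaximalMinors Z) {F : Fin p → Fin n} (hF : F.Injective)
    (hsign : (Tuple.sort F).sign = 1) : 0 < Matrix.det (Matrix.of fun a b => Z (F a) b) := by
  have hsorted := hZ (F ∘ Tuple.sort F)
    ((Tuple.monotone_sort F).strictMono_of_injective (hF.comp (Equiv.injective _)))
  have hperm : Matrix.det (Matrix.of fun a b => Z ((F ∘ Tuple.sort F) a) b) =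
      Matrix.det (Matrix.of fun a b => Z (F a) b) := by
    have := Matrix.det_permute (Tuple.sort F) (Matrix.of fun a b => Z (F a) b)
    rwa [hsign, Units.val_one, Int.cast_one, one_mul] at this
  exact hperm ▸ hsorted

theorem PosMaximalMinors.det_append_rows_pos {k m n : ℕ} {Z : Matrix (Fin n) (Fin (k + m)) ℝ}
    (hZ : PosMaximalMinors Z) {g : Fin k → Fin n} {I : Fin m → Fin n} (hm : Even m)
    (hg : StrictMono g) (hI : StrictMono I) (hpair : ConsecPairs I) (hdisj : ∀ a t, g a ≠ I t) :
    0 < Matrix.det (Matrix.of fun a b => Z (Fin.append g I a) b) :=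
  hZ.det_rows_pos (Fin.append_injective_iff.2 ⟨hg.injective, hI.injective, hdisj⟩)
    (hpair.sign_sort_append_eq_one hm hg hI hdisj)

theorem PosMaximalMinors.det_append_rows_nonneg {k m n : ℕ}
    {Z : Matrix (Fin n) (Fin (k + m)) ℝ} (hZ : PosMaximalMinors Z) {g : Fin k → Fin n}
    {I : Fin m → Fin n} (hm : Even m) (hg : StrictMono g) (hI : StrictMono I)
    (hpair : ConsecPairs I) : 0 ≤ Matrix.det (Matrix.of fun a b => Z (Fin.append g I a) b) := by
  by_cases hdisj : ∀ a t, g a ≠ I t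
  · exact (hZ.det_append_rows_pos hm hg hI hpair hdisj).le
  · have hrep : ¬(Fin.append g I).Injective := fun h =>
      hdisj (Fin.append_injective_iff.1 h).2.2
    obtain ⟨i, j, hij, hne⟩ := Function.not_injective_iff.1 hrep
    exact (Matrix.det_zero_of_row_eq hne (by ext b; simp [hij])).ge

theorem twistor_mul_eq_sum {k m n : ℕ} (Z : Matrix (Fin n) (Fin (k + m)) ℝ)
    (C : Matrix (Fin k) (Fin n) ℝ) (I : Fin m → Fin n) :
    open Classical in
    twistor Z (C * Z) I = ∑ g ∈ univ.filter (StrictMono : (Fin k → Fin n) → Prop),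
      (C.submatrix id g).det * Matrix.det (Matrix.of fun a b => Z (Fin.append g I a) b) := by
  let φ := (Matrix.detRowAlternating.compLinearMap
    (LinearMap.funLeft ℝ ℝ finSumFinEquiv)).fixInr fun b => Z (I b)
  have hrows : (fun a => (C * Z) a) = fun a => ∑ x, C a x • Z x := by
    ext a j
    simp [Matrix.mul_apply, Finset.sum_apply]
  have happend : ∀ g : Fin k → Fin n,
      φ (Z ∘ g) = Matrix.det (Matrix.of fun a b => Z (Fin.append g I a) b) := by
    intro g
    change Matrix.det (Matrix.of fun i j =>
      Sum.elim (fun a => Z (g a)) (fun b => Z (I b)) i (finSumFinEquiv j)) = _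
    rw [← Matrix.det_submatrix_equiv_self finSumFinEquiv.symm]
    congr 1
    ext a b
    refine Fin.addCases (fun i => ?_) (fun t => ?_) a <;> simp
  change φ (fun a => (C * Z) a) = _
  rw [hrows]
  refine (φ.map_sum_smul_eq_sum_det_smul C fun x => Z x).trans (sum_congr rfl fun g _ => ?_)
  rw [smul_eq_mul, ← happend]

/-- Strict coarse boundary condition, `m` even: for `Y = C Z` with `C, Z` positive and
`I = (i_1, i_1+1, …, i_{m/2}, i_{m/2}+1)` strictly increasing, `⟨Y, I⟩ > 0`. -/
theorem stmt7 (k m n : ℕ) (hm : Even m) (hmn : k + m ≤ n)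
    (Z : Matrix (Fin n) (Fin (k + m)) ℝ) (hZ : PosMaximalMinors Z)
    (C : Matrix (Fin k) (Fin n) ℝ) (hC : PosRowMinors C)
    (I : Fin m → Fin n) (hI : StrictMono I) (hpair : ConsecPairs I) :
    0 < twistor Z (C * Z) I := by
  obtain ⟨g₀, hg₀, hdisj₀⟩ := exists_strictMono_forall_ne hI.injective (k := k)
    (by rwa [Fintype.card_fin])
  rw [twistor_mul_eq_sum]
  refine sum_pos' (fun g hg => ?_) ⟨g₀, mem_filter.2 ⟨mem_univ _, hg₀⟩, ?_⟩
  · have hg := (mem_filter.1 hg).2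
    exact mul_nonneg (hC g hg).le (hZ.det_append_rows_nonneg hm hg hI hpair)
  · exact mul_pos (hC g₀ hg₀) (hZ.det_append_rows_pos hm hg₀ hI hpair hdisj₀)
end

section
/- Let k, m, n be nonnegative integers with m even, k+m ≤ n, let Z be an n×(k+m) matrix with positive maximal minors and C a k×n matrix with positive maximal minors, and Y = CZ. Then for any list I = (i_1, i_1+1, ..., i_{m/2−1}, i_{m/2−1}+1) of m−2 strictly increasing integers in [2, n−1], we have (−1)^{k+1} ⟨Y, I, n, 1⟩ > 0. -/
/-!
Here `I` has `m` entries, `m` even. Put `S = (1, I, n)`: moving `Z_1` in front of `Z_I, Z_n`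
is a cycle of length `m + 2`, so `⟨Y, I, n, 1⟩ = -⟨Y, S⟩`. For `Y = C Z` the matrix of
`⟨Y, S⟩` is `A Z`, where `A` stacks `C` on top of the unit rows `e_s`, `s ∈ S`, and
Cauchy–Binet writes `det (A Z)` as the sum of `det A_J * det Z_J` over the
`(k + m + 2)`-subsets `J` of `[n]`. The minor `det A_J` vanishes unless `S ⊆ J`; then Laplace
expansion along the unit rows gives `det A_J = ± det C_{J \ S}`, with sign
`(-1) ^ ∑_b (k + b + pos_b)`, where `pos_b` is the position of `S_b` in `J`, counted from `0`.
As `1` comes first in `J`, `n` comes last, and each pair `i, i + 1` of `I` occupies two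
consecutive positions, this sign is `(-1) ^ k` for every `J`. Hence `(-1) ^ k det (A Z)` is a
sum of nonnegative terms, one of them positive.
-/

open Matrix Finset

section CauchyBinet

variable {R : Type*} [CommRing R] {p n : ℕ}

theorem det_mul_eq_sum_prod_mul_det_submatrix (A : Matrix (Fin p) (Fin n) R)
    (B : Matrix (Fin n) (Fin p) R) :
    (A * B).det = ∑ f : Fin p → Fin n, (∏ i, B (f i) i) * (A.submatrix id f).det := by
  simp only [det_apply', mul_apply, prod_univ_sum, mul_sum, Fintype.piFinset_univ,
    prod_mul_distrib, submatrix_apply, id_eq]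
  rw [sum_comm]
  exact sum_congr rfl fun f _ => sum_congr rfl fun σ _ => by ring

theorem exists_strictMono_comp_perm_eq_of_injective {f : Fin p → Fin n}
    (hf : Function.Injective f) :
    ∃ g : Fin p → Fin n, StrictMono g ∧ ∃ σ : Equiv.Perm (Fin p), g ∘ σ = f :=
  ⟨f ∘ Tuple.sort f, (Tuple.monotone_sort f).strictMono_of_injective
    (hf.comp (Tuple.sort f).injective), (Tuple.sort f)⁻¹, by ext; simp⟩

theorem eq_of_strictMono_comp_perm_eq {g g' : Fin p → Fin n} (hg : StrictMono g)
    (hg' : StrictMono g') {σ σ' : Equiv.Perm (Fin p)} (h : g ∘ σ = g' ∘ σ') :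
    g = g' ∧ σ = σ' := by
  obtain rfl : g = g' := (hg.range_inj hg').mp <| by
    rw [← σ.surjective.range_comp, h, σ'.surjective.range_comp]
  exact ⟨rfl, Equiv.ext fun i => hg.injective (congrFun h i)⟩

open scoped Classical in
theorem det_mul_eq_sum_strictMono (A : Matrix (Fin p) (Fin n) R)
    (B : Matrix (Fin n) (Fin p) R) :
    (A * B).det = ∑ g ∈ univ.filter StrictMono,
      (A.submatrix id g).det * (B.submatrix g id).det := by
  rw [det_mul_eq_sum_prod_mul_det_submatrix]
  symm
  calc _ = ∑ x ∈ univ.filter StrictMono ×ˢ (univ : Finset (Equiv.Perm (Fin p))),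
        (∏ i, B (x.1 (x.2 i)) i) * (A.submatrix id (x.1 ∘ x.2)).det := by
        rw [sum_product]
        refine sum_congr rfl fun g _ => ?_
        simp only [det_apply' (B.submatrix g id), mul_sum, submatrix_apply, id_eq]
        refine sum_congr rfl fun σ _ => ?_
        rw [show A.submatrix id (g ∘ σ) = (A.submatrix id g).submatrix id σ from rfl,
          det_permute']
        ring
    _ = _ := by
        refine sum_of_injOn (fun x => x.1 ∘ x.2) ?_ (fun _ _ => mem_univ _) ?_ fun _ _ => rfl
        · rintro ⟨g, σ⟩ hx ⟨g', σ'⟩ hx' h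
          simp only [coe_product, Set.mem_prod, coe_filter, mem_univ, true_and] at hx hx'
          obtain ⟨rfl, rfl⟩ := eq_of_strictMono_comp_perm_eq hx.1 hx'.1 h
          rfl
        · intro f _ hf
          obtain ⟨i, j, hfij, hij⟩ : ∃ i j, f i = f j ∧ i ≠ j := by
            by_contra! hinj
            obtain ⟨g, hg, σ, rfl⟩ := exists_strictMono_comp_perm_eq_of_injective hinj
            exact hf ⟨(g, σ), by simp [hg], rfl⟩
          rw [det_zero_of_column_eq hij fun _ => by simp [hfij], mul_zero]

end CauchyBinet

theorem pos_mul_det_mul_of_minors {R : Type*} [CommRing R] [LinearOrder R]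
    [IsStrictOrderedRing R] {p n : ℕ} (A : Matrix (Fin p) (Fin n) R)
    (B : Matrix (Fin n) (Fin p) R) (c : R)
    (hB : ∀ g, StrictMono g → 0 < (B.submatrix g id).det)
    (hA : ∀ g, StrictMono g → 0 ≤ c * (A.submatrix id g).det)
    (hA' : ∃ g, StrictMono g ∧ 0 < c * (A.submatrix id g).det) :
    0 < c * (A * B).det := by
  classical
  obtain ⟨g₀, hg₀, hpos⟩ := hA'
  rw [det_mul_eq_sum_strictMono, mul_sum]
  refine sum_pos' (fun g hg => ?_) ⟨g₀, by simpa using hg₀, ?_⟩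
  · have hg : StrictMono g := (mem_filter.mp hg).2
    rw [← mul_assoc]
    exact mul_nonneg (hA g hg) (hB g hg).le
  · rw [← mul_assoc]
    exact mul_pos hpos (hB g₀ hg₀)

theorem det_eq_neg_one_pow_mul_det_of_rows_eq_single {R : Type*} [CommRing R] {k : ℕ} :
    ∀ {s : ℕ} (W : Matrix (Fin (k + s)) (Fin (k + s)) R) {q : Fin s → Fin (k + s)}
      {c : Fin k → Fin (k + s)}, StrictMono q → StrictMono c → (∀ a b, c a ≠ q b) →
      (∀ b, W (Fin.natAdd k b) = Pi.single (q b) 1) →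
      W.det = (-1) ^ (∑ b, (k + b + (q b : ℕ))) * (W.submatrix (Fin.castAdd s) c).det
  | 0, W, q, c, _, hc, _, _ => by
    obtain rfl : c = id := hc.eq_id
    simp
  | s + 1, W, q, c, hq, hc, hcq, hrow => by
    -- Expand along the last row: its `1` sits in column `q (last s)`, the largest of the `q b`,
    -- so deleting that column leaves the other `q b` in place.
    set ql := q (Fin.last s)
    have hlt : ∀ b : Fin s, q b.castSucc < ql := fun b => hq (Fin.castSucc_lt_last b)
    have hpre : ∀ a, ∃ z : Fin (k + s), ql.succAbove z = c a :=
      fun a => Fin.exists_succAbove_eq (hcq a (Fin.last s))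
    choose c' hc' using hpre
    set q' : Fin s → Fin (k + s) := fun b => (q b.castSucc).castPred (Fin.ne_last_of_lt (hlt b))
    have hq' : ∀ b, ql.succAbove (q' b) = q b.castSucc :=
      fun b => Fin.succAbove_castPred_of_lt _ _ (hlt b)
    set W' := W.submatrix (Fin.last (k + s)).succAbove ql.succAbove
    have IH := det_eq_neg_one_pow_mul_det_of_rows_eq_single W' (q := q') (c := c')
      (fun a b hab => by simpa [q'] using hq (Fin.castSucc_lt_castSucc_iff.mpr hab))
      (fun a b hab => (Fin.strictMono_succAbove ql).lt_iff_lt.mp (by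
        rw [hc', hc']; exact hc hab))
      (fun a b h => hcq a b.castSucc (by rw [← hc', h, hq']))
      (fun b => by
        ext j
        have : Fin.castSucc (Fin.natAdd k b) = Fin.natAdd k b.castSucc := rfl
        simp [W', this, hrow, Pi.single_apply, ← hq'])
    have hsub : W'.submatrix (Fin.castAdd s) c' = W.submatrix (Fin.castAdd (s + 1)) c := by
      ext a b
      simp [W', hc']
      rfl
    have hlast : Fin.last (k + s) = Fin.natAdd k (Fin.last s) := rfl
    rw [det_succ_row W (Fin.last (k + s)), hlast, hrow]
    simp only [Pi.single_apply, mul_ite, ite_mul, mul_one, mul_zero, zero_mul, sum_ite_eq',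
      mem_univ, if_true]
    rw [← hlast, IH, hsub, Fin.sum_univ_castSucc]
    simp only [q', Fin.coe_castPred, Fin.val_castSucc, Fin.val_last, pow_add]
    ring

theorem exists_strictMono_forall_ne_s8 {k s : ℕ} {q : Fin s → Fin (k + s)}
    (hq : Function.Injective q) :
    ∃ c : Fin k → Fin (k + s), StrictMono c ∧ ∀ a b, c a ≠ q b := by
  classical
  have hcard : (univ.image q)ᶜ.card = k := by
    rw [card_compl, card_image_of_injective _ hq]
    simp
  refine ⟨_, ((univ.image q)ᶜ.orderEmbOfFin hcard).strictMono, fun a b h => ?_⟩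
  have := (univ.image q)ᶜ.orderEmbOfFin_mem hcard a
  simp [h] at this

theorem exists_strictMono_forall_mem_range {s p n : ℕ} {S : Fin s → Fin n}
    (hS : Function.Injective S) (hsp : s ≤ p) (hpn : p ≤ n) :
    ∃ g : Fin p → Fin n, StrictMono g ∧ ∀ b, ∃ j, g j = S b := by
  classical
  obtain ⟨t, hst, hcard⟩ := exists_superset_card_eq (s := univ.image S) (n := p)
    (by simpa [card_image_of_injective _ hS]) (by simpa)
  refine ⟨_, (t.orderEmbOfFin hcard).strictMono, fun b => ?_⟩
  have : S b ∈ Set.range (t.orderEmbOfFin hcard) := by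
    rw [range_orderEmbOfFin]
    exact hst (mem_image_of_mem S (mem_univ b))
  exact this

def appendBasisRows {R : Type*} [Zero R] [One R] {k m n : ℕ}
    (C : Matrix (Fin k) (Fin n) R) (V : Fin m → Fin n) : Matrix (Fin (k + m)) (Fin n) R :=
  Fin.addCases C fun b => Pi.single (V b) 1

section AppendBasisRows

variable {R : Type*} {k m n : ℕ}

@[simp] theorem appendBasisRows_castAdd [Zero R] [One R] (C : Matrix (Fin k) (Fin n) R)
    (V : Fin m → Fin n) (a : Fin k) : appendBasisRows C V (Fin.castAdd m a) = C a :=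
  Fin.addCases_left a

@[simp] theorem appendBasisRows_natAdd [Zero R] [One R] (C : Matrix (Fin k) (Fin n) R)
    (V : Fin m → Fin n) (b : Fin m) :
    appendBasisRows C V (Fin.natAdd k b) = Pi.single (V b) 1 :=
  Fin.addCases_right b

theorem det_submatrix_appendBasisRows_eq_zero [CommRing R] (C : Matrix (Fin k) (Fin n) R)
    {V : Fin m → Fin n} {g : Fin (k + m) → Fin n} {b : Fin m} (hb : ∀ j, g j ≠ V b) :
    ((appendBasisRows C V).submatrix id g).det = 0 :=
  det_eq_zero_of_row_eq_zero (Fin.natAdd k b) fun j => by simp [hb j]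

theorem exists_det_submatrix_appendBasisRows [CommRing R] (C : Matrix (Fin k) (Fin n) R)
    {V : Fin m → Fin n} {g : Fin (k + m) → Fin n} (hg : StrictMono g)
    {q : Fin m → Fin (k + m)} (hq : StrictMono q) (hgq : ∀ b, g (q b) = V b) :
    ∃ c : Fin k → Fin (k + m), StrictMono c ∧ ((appendBasisRows C V).submatrix id g).det
      = (-1) ^ (∑ b, (k + b + (q b : ℕ))) * (C.submatrix id (g ∘ c)).det := by
  obtain ⟨c, hc, hcq⟩ := exists_strictMono_forall_ne_s8 hq.injective
  refine ⟨c, hc, ?_⟩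
  rw [det_eq_neg_one_pow_mul_det_of_rows_eq_single _ hq hc hcq fun b => ?_]
  · congr 2
    ext a j
    simp
  · ext j
    simp [Pi.single_apply, ← hgq, hg.injective.eq_iff]

end AppendBasisRows

theorem twistor_comp_perm {k m n : ℕ} (Z : Matrix (Fin n) (Fin (k + m)) ℝ)
    (Y : Matrix (Fin k) (Fin (k + m)) ℝ) (V : Fin m → Fin n) (σ : Equiv.Perm (Fin m)) :
    twistor Z Y (V ∘ σ) = Equiv.Perm.sign σ * twistor Z Y V := by
  have h := det_permute (Equiv.sumCongr (Equiv.refl (Fin k)) σ)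
    (of fun i j : Fin k ⊕ Fin m =>
      Sum.elim (fun a => Y a) (fun b => Z (V b)) i (finSumFinEquiv j))
  rw [Equiv.Perm.sign_sumCongr, Equiv.Perm.sign_refl, one_mul] at h
  rw [twistor, twistor, ← h]
  congr 1
  ext (i | i) j <;> rfl

theorem twistor_mul_eq_det_appendBasisRows {k m n : ℕ} (Z : Matrix (Fin n) (Fin (k + m)) ℝ)
    (C : Matrix (Fin k) (Fin n) ℝ) (V : Fin m → Fin n) :
    twistor Z (C * Z) V = (appendBasisRows C V * Z).det := by
  rw [twistor, ← det_submatrix_equiv_self finSumFinEquiv.symm]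
  congr 1
  ext r j
  induction r using Fin.addCases with
  | left a => simp [mul_apply]
  | right b => simp [mul_apply, Pi.single_apply]

theorem even_sum_of_even_add_consecutive :
    ∀ {m : ℕ}, Even m → ∀ f : Fin m → ℕ,
      (∀ i j : Fin m, (i : ℕ) + 1 = j → (i : ℕ) % 2 = 0 → Even (f i + f j)) →
      Even (∑ i, f i)
  | 0, _, _, _ => by simp
  | 1, h, _, _ => absurd h (by decide)
  | m + 2, h, f, hf => by
    rw [Fin.sum_univ_castSucc, Fin.sum_univ_castSucc, add_assoc]
    exact (even_sum_of_even_add_consecutive (by simpa [Nat.even_add] using h) _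
      fun i j hij hi => hf _ _ (by simpa using hij) (by simpa using hi)).add
      (hf _ _ (by simp) (by simpa [Nat.even_iff] using h))

section StrictMonoFin

variable {p n : ℕ} {g : Fin p → Fin n} (hg : StrictMono g)
include hg

theorem val_eq_zero_of_strictMono {i : Fin p} (hi : (g i : ℕ) = 0) : (i : ℕ) = 0 := by
  by_contra h
  have := hg (show (⟨0, by omega⟩ : Fin p) < i from Fin.lt_def.mpr (by simp; omega))
  omega

theorem val_eq_sub_one_of_strictMono {i : Fin p} (hi : (g i : ℕ) = n - 1) :
    (i : ℕ) = p - 1 := by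
  by_contra h
  have := hg (show i < (⟨p - 1, by omega⟩ : Fin p) from Fin.lt_def.mpr (by simp; omega))
  have := (g ⟨p - 1, by omega⟩).isLt
  omega

theorem val_eq_add_one_of_strictMono {i j : Fin p} (hij : (g j : ℕ) = g i + 1) :
    (j : ℕ) = i + 1 := by
  have hlt : i < j := hg.lt_iff_lt.mp (Fin.lt_def.mpr (by omega))
  by_contra h
  have h₁ := hg (show i < ⟨i + 1, by omega⟩ from Fin.lt_def.mpr (by simp))
  have h₂ := hg (show (⟨i + 1, by omega⟩ : Fin p) < j from Fin.lt_def.mpr (by simp; omega))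
  rw [Fin.lt_def] at h₁ h₂
  omega

end StrictMonoFin

theorem even_add_sum_positions {k m n : ℕ} (hm : Even m) {g : Fin (k + (m + 2)) → Fin n}
    (hg : StrictMono g) {q : Fin (m + 2) → Fin (k + (m + 2))} (h₀ : (g (q 0) : ℕ) = 0)
    (hlast : (g (q (Fin.last (m + 1))) : ℕ) = n - 1)
    (hpair : ConsecPairs (g ∘ q ∘ Fin.succ ∘ Fin.castSucc)) :
    Even (k + ∑ b, (k + b + (q b : ℕ))) := by
  have hq₀ := val_eq_zero_of_strictMono hg h₀
  have hqlast := val_eq_sub_one_of_strictMono hg hlast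
  have hmid := even_sum_of_even_add_consecutive hm
    (fun i => k + (i.castSucc.succ : ℕ) + (q i.castSucc.succ : ℕ)) fun i j hij hi => by
      have := val_eq_add_one_of_strictMono hg (hpair i j hij hi)
      simp only [Function.comp_apply, Fin.val_succ, Fin.val_castSucc] at this ⊢
      rw [Nat.even_iff]
      omega
  rw [Fin.sum_univ_succ, Fin.sum_univ_castSucc]
  simp only [Fin.succ_last, Nat.succ_eq_add_one, Fin.val_zero, Fin.val_last] at hmid hqlast ⊢
  rw [Nat.even_iff] at hmid ⊢
  omega

theorem pos_neg_one_pow_mul_det_submatrix_appendBasisRows {k m n : ℕ} (hm : Even m)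
    {C : Matrix (Fin k) (Fin n) ℝ} (hC : PosRowMinors C) {S : Fin (m + 2) → Fin n}
    (hS : StrictMono S) (h₀ : (S 0 : ℕ) = 0) (hlast : (S (Fin.last (m + 1)) : ℕ) = n - 1)
    (hpair : ConsecPairs (S ∘ Fin.succ ∘ Fin.castSucc)) {g : Fin (k + (m + 2)) → Fin n}
    (hg : StrictMono g) (hgS : ∀ b, ∃ j, g j = S b) :
    0 < (-1) ^ k * ((appendBasisRows C S).submatrix id g).det := by
  choose q hq using hgS
  have hqmono : StrictMono q := fun a b hab => hg.lt_iff_lt.mp (by simpa [hq] using hS hab)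
  obtain ⟨c, hc, hdet⟩ := exists_det_submatrix_appendBasisRows C hg hqmono hq
  have hpar := even_add_sum_positions hm hg (q := q) (by rwa [hq]) (by rwa [hq])
    (by simpa [Function.comp_def, hq] using hpair)
  rw [hdet, ← mul_assoc, ← pow_add, hpar.neg_one_pow, one_mul]
  exact hC _ (hg.comp hc)

theorem pos_neg_one_pow_mul_det_appendBasisRows_mul {k m n : ℕ} (hm : Even m)
    (hmn : k + (m + 2) ≤ n) {Z : Matrix (Fin n) (Fin (k + (m + 2))) ℝ} (hZ : PosMaximalMinors Z)
    {C : Matrix (Fin k) (Fin n) ℝ} (hC : PosRowMinors C) {S : Fin (m + 2) → Fin n}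
    (hS : StrictMono S) (h₀ : (S 0 : ℕ) = 0) (hlast : (S (Fin.last (m + 1)) : ℕ) = n - 1)
    (hpair : ConsecPairs (S ∘ Fin.succ ∘ Fin.castSucc)) :
    0 < (-1) ^ k * (appendBasisRows C S * Z).det := by
  have hminor : ∀ g, StrictMono g → (∀ b, ∃ j, g j = S b) →
      0 < (-1) ^ k * ((appendBasisRows C S).submatrix id g).det :=
    fun _ => pos_neg_one_pow_mul_det_submatrix_appendBasisRows hm hC hS h₀ hlast hpair
  obtain ⟨g₀, hg₀, hg₀S⟩ := exists_strictMono_forall_mem_range hS.injective (by omega) hmn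
  refine pos_mul_det_mul_of_minors _ Z _ hZ (fun g hg => ?_)
    ⟨g₀, hg₀, hminor g₀ hg₀ hg₀S⟩
  by_cases hgS : ∀ b, ∃ j, g j = S b
  · exact (hminor g hg hgS).le
  · obtain ⟨b, hb⟩ := not_forall.mp hgS
    rw [det_submatrix_appendBasisRows_eq_zero C (not_exists.mp hb), mul_zero]

theorem strictMono_cons_snoc {α : Type*} [Preorder α] {m : ℕ} {L : Fin m → α} {a b : α}
    (hL : StrictMono L) (ha : ∀ i, a < L i) (hb : ∀ i, L i < b) (hab : a < b) :
    StrictMono (Fin.cons a (Fin.snoc L b) : Fin (m + 2) → α) := by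
  have hsnoc : StrictMono (Fin.snoc L b : Fin (m + 1) → α) := by
    rw [← Fin.insertNth_last', Fin.strictMono_insertNth_iff]
    exact ⟨hL, fun i _ => hb i, fun i h => absurd h (by simp)⟩
  refine Fin.strictMono_cons.mpr ⟨Fin.lastCases ?_ fun i => ?_, hsnoc⟩
  · simpa using hab
  · simpa using ha i

/-- Strict coarse boundary condition, even case with wrap-around: for a strictly increasing
pair list `I` of length `m` (paper's `m − 2`) with entries in `[2, n−1]` (1-indexed; in
0-indexed `Fin n` terms, values in `[1, n−2]`), one has `(−1)^{k+1} ⟨Y, I, n, 1⟩ > 0`,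
where `Y = C Z`. The paper's even `m` is `m + 2` here. -/
theorem stmt8 (k m n : ℕ) (hm : Even m) (hmn : k + (m + 2) ≤ n)
    (Z : Matrix (Fin n) (Fin (k + (m + 2))) ℝ) (hZ : PosMaximalMinors Z)
    (C : Matrix (Fin k) (Fin n) ℝ) (hC : PosRowMinors C)
    (L : Fin m → Fin n) (hL : StrictMono L) (hpair : ConsecPairs L)
    (hrange : ∀ j, 1 ≤ (L j : ℕ) ∧ (L j : ℕ) ≤ n - 2) :
    0 < (-1 : ℝ) ^ (k + 1) *
      twistor Z (C * Z)
        (Fin.snoc (Fin.snoc L (⟨n - 1, by omega⟩ : Fin n)) (⟨0, by omega⟩ : Fin n)) := by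
  set S : Fin (m + 2) → Fin n := Fin.cons ⟨0, by omega⟩ (Fin.snoc L ⟨n - 1, by omega⟩)
  have hS : StrictMono S := strictMono_cons_snoc hL (fun i => Fin.lt_def.mpr (hrange i).1)
    (fun i => Fin.lt_def.mpr (by have := hrange i; simp; omega)) (Fin.lt_def.mpr (by simp; omega))
  have hpos := pos_neg_one_pow_mul_det_appendBasisRows_mul hm hmn hZ hC hS rfl (by simp [S])
    (by simpa [S, Function.comp_def] using hpair)
  have hsign : (-1 : ℝ) ^ (k + 1) * (((-1 : ℤˣ) ^ (m + 2 - 1) : ℤˣ) : ℤ) = (-1) ^ k := by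
    rw [show m + 2 - 1 = m + 1 by omega]
    push_cast
    rw [pow_succ, pow_succ, hm.neg_one_pow]
    ring
  rw [Fin.snoc_eq_cons_rotate, show (fun i => S (finRotate _ i)) = S ∘ finRotate (m + 2) from rfl,
    twistor_comp_perm, sign_finRotate, twistor_mul_eq_det_appendBasisRows, ← mul_assoc, hsign]
  exact hpos
end

section
/- Let m = 2r−1 be odd, k, n with k+m ≤ n, Z an n×(k+m) matrix with positive maximal minors, C a k×n matrix, Y = CZ. Let B = (b_1, b_1+1, ..., b_{r−1}, b_{r−1}+1) be a list of m−1 integers in [n]. Then the sequence (⟨Y, B, i⟩)_{i=1,...,n} changes sign (ignoring zeros) at most k times. -/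
/-- The number of sign changes of a list of reals, ignoring zeros: remove the zero entries
and count adjacent pairs of opposite sign. -/
noncomputable def signFlips (l : List ℝ) : ℕ :=
  let l' := l.filter fun x => decide (x ≠ 0)
  (l'.zip l'.tail).countP fun p => decide (p.1 * p.2 < 0)

/-!
The twistor coordinate `⟨Y, B, i⟩` is linear in the row `Z i`, so the sequence is `Z w` for some
vector `w`, and it vanishes at the entries of `B`. If it changed sign `k + 1` times, choose `k + 2`
indices on which it strictly alternates; together with the `2r` entries of `B` they select
`k + m + 1` rows of `Z`. Expanding the (singular) matrix formed by these rows and the column `Z w`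
along that column, the alternating sum of the maximal minors of the selected rows weighted by `Z w`
vanishes. The minors are positive, and since `B` consists of adjacent pairs, an even number of its
entries precedes each alternation index, so every nonzero term of the sum has the same sign.
-/

open Matrix Finset

theorem Matrix.sum_neg_one_pow_mul_det_submatrix_succAbove_mul_mulVec {R : Type*} [CommRing R]
    [IsDomain R] {p : ℕ} (A : Matrix (Fin (p + 1)) (Fin p) R) (w : Fin p → R) :
    ∑ s : Fin (p + 1),
      (-1) ^ (s : ℕ) * (A.submatrix s.succAbove id).det * (A *ᵥ w) s = 0 := by
  set M : Matrix (Fin (p + 1)) (Fin (p + 1)) R := of fun s => Fin.cons ((A *ᵥ w) s) (A s)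
  have hM : M.det = 0 := by
    refine exists_mulVec_eq_zero_iff.mp ⟨Fin.cons (-1) w, fun h => ?_, ?_⟩
    · simpa using congr_fun h 0
    · ext s
      simp [M, mulVec, dotProduct, Fin.sum_univ_succ]
  rw [det_succ_column_zero] at hM
  rw [← hM]
  refine sum_congr rfl fun s _ => ?_
  have hminor : M.submatrix s.succAbove Fin.succ = A.submatrix s.succAbove id := by
    ext
    simp [M]
  rw [hminor]
  simp only [M, of_apply, Fin.cons_zero]
  ring

theorem PosMaximalMinors.mulVec_eq_zero_of_alternating_nonneg {n p : ℕ}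
    {Z : Matrix (Fin n) (Fin p) ℝ} (hZ : PosMaximalMinors Z) {F : Fin (p + 1) → Fin n}
    (hF : StrictMono F) {w : Fin p → ℝ}
    (h : ∀ s : Fin (p + 1), 0 ≤ (-1) ^ (s : ℕ) * (Z *ᵥ w) (F s)) (s : Fin (p + 1)) :
    (Z *ᵥ w) (F s) = 0 := by
  set A : Matrix (Fin (p + 1)) (Fin p) ℝ := Z.submatrix F id
  have hminor (s : Fin (p + 1)) : 0 < (A.submatrix s.succAbove id).det :=
    hZ _ (hF.comp (Fin.strictMono_succAbove s))
  have hsum := sum_neg_one_pow_mul_det_submatrix_succAbove_mul_mulVec A w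
  have hterm (s : Fin (p + 1)) :
      (-1) ^ (s : ℕ) * (A.submatrix s.succAbove id).det * (A *ᵥ w) s =
        (A.submatrix s.succAbove id).det * ((-1) ^ (s : ℕ) * (Z *ᵥ w) (F s)) := by
    rw [show (A *ᵥ w) s = (Z *ᵥ w) (F s) from rfl]
    ring
  simp only [hterm] at hsum
  have := (sum_eq_zero_iff_of_nonneg fun s _ => mul_nonneg (hminor s).le (h s)).mp hsum s
    (mem_univ s)
  simpa [(hminor s).ne'] using this

theorem twistor_snoc_apply_self {k m n : ℕ} (Z : Matrix (Fin n) (Fin (k + (m + 1))) ℝ)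
    (Y : Matrix (Fin k) (Fin (k + (m + 1))) ℝ) (B : Fin m → Fin n) (a : Fin m) :
    twistor Z Y (Fin.snoc B (B a)) = 0 :=
  det_zero_of_row_eq (i := Sum.inr a.castSucc) (j := Sum.inr (Fin.last m))
    (by simp [(Fin.castSucc_lt_last a).ne]) (by ext; simp)

theorem exists_twistor_snoc_eq_mulVec {k m n : ℕ} (Z : Matrix (Fin n) (Fin (k + (m + 1))) ℝ)
    (Y : Matrix (Fin k) (Fin (k + (m + 1))) ℝ) (B : Fin m → Fin n) :
    ∃ w, ∀ i, twistor Z Y (Fin.snoc B i) = (Z *ᵥ w) i := by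
  set M : Matrix (Fin k ⊕ Fin (m + 1)) (Fin k ⊕ Fin (m + 1)) ℝ :=
    of fun a j => Sum.elim (fun a => Y a) (Fin.snoc (fun b => Z (B b)) 0) a (finSumFinEquiv j)
  refine ⟨fun j => Mᵀ.adjugate (Sum.inr (Fin.last m)) (finSumFinEquiv.symm j), fun i => ?_⟩
  have hrow : twistor Z Y (Fin.snoc B i) =
      (M.updateRow (Sum.inr (Fin.last m)) fun j => Z i (finSumFinEquiv j)).det := by
    unfold twistor
    congr 1
    ext a j
    rcases a with a | b
    · simp [M]
    · induction b using Fin.lastCases <;> simp [M, updateRow_apply]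
  rw [hrow, ← cramer_transpose_apply, cramer_eq_adjugate_mulVec, mulVec, mulVec, dotProduct,
    dotProduct, ← finSumFinEquiv.sum_comp]
  simp [mul_comm]

open List in
theorem List.exists_sublist_isChain_mul_neg (l : List ℝ) (hl : ∀ x ∈ l, x ≠ 0) {a : ℝ}
    (ha : a ≠ 0) :
    ∃ ys, ys <+ l ∧ (a :: ys).IsChain (fun x y => x * y < 0) ∧
      ys.length = ((a :: l).zip l).countP fun p => decide (p.1 * p.2 < 0) := by
  induction l generalizing a with
  | nil => exact ⟨[], .slnil, .singleton a, rfl⟩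
  | cons b l ih =>
    have hb : b ≠ 0 := hl b mem_cons_self
    obtain ⟨ys, hsub, hchain, hlen⟩ := ih (fun x hx => hl x (mem_cons_of_mem b hx)) hb
    by_cases hab : a * b < 0
    · refine ⟨b :: ys, hsub.cons_cons b, isChain_cons_cons.mpr ⟨hab, hchain⟩, ?_⟩
      simp [hab, hlen]
    · refine ⟨ys, hsub.cons b, ?_, ?_⟩
      · cases ys with
        | nil => exact .singleton a
        | cons y ys =>
          rw [isChain_cons_cons] at hchain ⊢
          refine ⟨?_, hchain.2⟩
          have hab' : 0 < a * b := (not_lt.mp hab).lt_of_ne' (mul_ne_zero ha hb)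
          nlinarith [mul_neg_of_pos_of_neg hab' hchain.1, mul_self_pos.mpr hb]
      · simp [hab, hlen]

open List in
theorem exists_sublist_isChain_mul_neg_of_lt_signFlips {l : List ℝ} {t : ℕ}
    (h : t < signFlips l) :
    ∃ xs, xs <+ l ∧ xs.IsChain (fun x y => x * y < 0) ∧ xs.length = t + 2 := by
  unfold signFlips at h
  generalize hl' : l.filter (fun x => decide (x ≠ 0)) = l' at h
  cases l' with
  | nil => simp at h
  | cons a l' =>
    have hnz : ∀ x ∈ a :: l', x ≠ 0 := fun x hx =>
      of_decide_eq_true (List.of_mem_filter (p := fun x => decide (x ≠ 0)) (hl' ▸ hx))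
    obtain ⟨ys, hsub, hchain, hlen⟩ :=
      List.exists_sublist_isChain_mul_neg l' (fun x hx => hnz x (List.mem_cons_of_mem a hx))
        (hnz a List.mem_cons_self)
    refine ⟨(a :: ys).take (t + 2), ?_, hchain.take _, ?_⟩
    · exact (List.take_sublist _ _).trans ((hsub.cons_cons a).trans (hl' ▸ List.filter_sublist))
    · simp only [List.tail_cons] at h
      simp only [List.length_take, List.length_cons, hlen]
      omega

theorem exists_strictMono_alternating_of_lt_signFlips {n t : ℕ} (v : Fin n → ℝ)
    (h : t < signFlips ((List.finRange n).map v)) :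
    ∃ g : Fin (t + 2) → Fin n, StrictMono g ∧
      ∀ s : Fin (t + 1), v (g s.castSucc) * v (g s.succ) < 0 := by
  obtain ⟨xs, hsub, hchain, hlen⟩ := exists_sublist_isChain_mul_neg_of_lt_signFlips h
  obtain ⟨l, hl, rfl⟩ := List.sublist_map_iff.mp hsub
  rw [List.length_map] at hlen
  rw [List.isChain_map, List.isChain_iff_getElem] at hchain
  refine ⟨fun s => l.get (s.cast hlen.symm), ?_, fun s => ?_⟩
  · exact ((List.pairwise_lt_finRange n).sublist hl).sortedLT.strictMono_get.comp
      (Fin.cast_strictMono _)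
  · exact hchain s (by omega)

theorem Finset.card_filter_lt_orderEmbOfFin {α : Type*} [LinearOrder α] (s : Finset α) {k : ℕ}
    (h : #s = k) (i : Fin k) : #{x ∈ s | x < s.orderEmbOfFin h i} = i := by
  have : {x ∈ s | x < s.orderEmbOfFin h i} = (Iio i).map (s.orderEmbOfFin h).toEmbedding := by
    ext x
    simp only [mem_filter, mem_map, mem_Iio, RelEmbedding.coe_toEmbedding]
    constructor
    · rintro ⟨hx, hlt⟩
      obtain ⟨j, rfl⟩ : x ∈ Set.range (s.orderEmbOfFin h) := by simpa using hx
      exact ⟨j, (s.orderEmbOfFin h).lt_iff_lt.mp hlt, rfl⟩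
    · rintro ⟨j, hj, rfl⟩
      exact ⟨s.orderEmbOfFin_mem h j, (s.orderEmbOfFin h).lt_iff_lt.mpr hj⟩
  rw [this, card_map, Fin.card_Iio]

theorem ConsecPairs.even_card_filter_lt {r n : ℕ} {B : Fin (2 * r) → Fin n}
    (hB : ConsecPairs B) {x : Fin n} (hx : ∀ a, B a ≠ x) : Even #{a | B a < x} := by
  -- `partner` swaps the two members of each pair; as `x` is not a value of `B`, the two values
  -- lie on the same side of `x`, so `partner` is a fixed-point-free involution of `{a | B a < x}`.
  let partner (a : Fin (2 * r)) : Fin (2 * r) :=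
    ⟨if (a : ℕ) % 2 = 0 then a + 1 else a - 1, by have := a.isLt; split_ifs <;> omega⟩
  have hpartner (a : Fin (2 * r)) :
      (B (partner a) : ℕ) = B a + 1 ∨ (B a : ℕ) = B (partner a) + 1 := by
    by_cases ha : (a : ℕ) % 2 = 0
    · exact .inl (hB a (partner a) (by simp [partner, ha]) ha)
    · exact .inr (hB (partner a) a (by simp [partner, ha]; omega) (by simp [partner, ha]; omega))
  have hinv : ∏ a ∈ {a | B a < x}, (-1 : ℤ) = 1 := by
    refine prod_involution (fun a _ => partner a) (fun _ _ => by norm_num) (fun a _ _ => ?_)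
      (fun a ha => ?_) (fun a _ => ?_)
    · simp only [ne_eq, Fin.ext_iff, partner]
      split_ifs <;> omega
    · have h₁ := Fin.val_ne_of_ne (hx a)
      have h₂ := Fin.val_ne_of_ne (hx (partner a))
      have := hpartner a
      simp only [mem_filter, mem_univ, true_and, Fin.lt_def] at ha ⊢
      omega
    · simp only [Fin.ext_iff, partner]
      split_ifs <;> omega
  rw [prod_const] at hinv
  exact (neg_one_pow_eq_one_iff_even (by decide)).mp hinv

theorem exists_strictMono_merge_of_consecPairs {a r n N : ℕ} {g : Fin a → Fin n}
    (hg : StrictMono g) {B : Fin (2 * r) → Fin n} (hB : StrictMono B) (hpair : ConsecPairs B)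
    (hgB : ∀ t b, g t ≠ B b) (hN : a + 2 * r = N) :
    ∃ F : Fin N → Fin n, StrictMono F ∧ Set.range F = Set.range g ∪ Set.range B ∧
      ∀ s t, F s = g t → ∃ c, (s : ℕ) = t + 2 * c := by
  have hdisj : Disjoint (univ.image g) (univ.image B) := by
    simp only [disjoint_left, mem_image, mem_univ, true_and]
    rintro _ ⟨t, rfl⟩ ⟨b, hb⟩
    exact hgB t b hb.symm
  have hT : #(univ.image g ∪ univ.image B) = N := by
    rw [card_union_of_disjoint hdisj, card_image_of_injective _ hg.injective,
      card_image_of_injective _ hB.injective, card_univ, card_univ, Fintype.card_fin,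
      Fintype.card_fin, hN]
  refine ⟨_, (orderEmbOfFin _ hT).strictMono, by simp [Set.image_univ], fun s t hst => ?_⟩
  obtain ⟨c, hc⟩ := hpair.even_card_filter_lt fun b hb => hgB t b hb.symm
  refine ⟨c, ?_⟩
  have hbelow_g : #{x ∈ univ.image g | x < g t} = t := by
    rw [filter_image, card_image_of_injective _ hg.injective]
    simp only [hg.lt_iff_lt, filter_gt_eq_Iio, Fin.card_Iio]
  rw [← card_filter_lt_orderEmbOfFin _ hT s, hst, filter_union,
    card_union_of_disjoint (disjoint_filter_filter hdisj), hbelow_g, filter_image,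
    card_image_of_injective _ hB.injective, hc, two_mul]

theorem neg_one_pow_mul_mul_pos_of_alternating {R : Type*} [CommRing R] [LinearOrder R]
    [IsStrictOrderedRing R] {N : ℕ} {f : Fin (N + 2) → R}
    (h : ∀ s : Fin (N + 1), f s.castSucc * f s.succ < 0) (t : Fin (N + 2)) :
    0 < (-1) ^ (t : ℕ) * (f 0 * f t) := by
  induction t using Fin.induction with
  | zero =>
    have : f 0 ≠ 0 := fun h0 => by simpa [h0] using h 0
    simpa using mul_self_pos.mpr this
  | succ s ih =>
    rw [Fin.val_succ, pow_succ]
    rw [Fin.val_castSucc] at ih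
    have := h s
    have hs : f s.castSucc ≠ 0 := fun h0 => by simp [h0] at this
    nlinarith [mul_neg_of_pos_of_neg ih this, mul_self_pos.mpr hs]

theorem stmt10_general (k r n : ℕ)
    (Z : Matrix (Fin n) (Fin (k + (2 * r + 1))) ℝ) (hZ : PosMaximalMinors Z)
    (C : Matrix (Fin k) (Fin n) ℝ)
    (B : Fin (2 * r) → Fin n) (hB : StrictMono B) (hpair : ConsecPairs B) :
    signFlips ((List.finRange n).map fun i => twistor Z (C * Z) (Fin.snoc B i)) ≤ k := by
  set v : Fin n → ℝ := fun i => twistor Z (C * Z) (Fin.snoc B i)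
  by_contra! hk
  obtain ⟨g, hg, halt⟩ := exists_strictMono_alternating_of_lt_signFlips v hk
  have hsign := neg_one_pow_mul_mul_pos_of_alternating (f := fun t => v (g t)) halt
  have hvB (b : Fin (2 * r)) : v (B b) = 0 := twistor_snoc_apply_self Z (C * Z) B b
  have hgB (t : Fin (k + 2)) (b : Fin (2 * r)) : g t ≠ B b := fun h => by
    simpa [h, hvB] using hsign t
  obtain ⟨F, hF, hrange, hparity⟩ :=
    exists_strictMono_merge_of_consecPairs hg hB hpair hgB (N := k + (2 * r + 1) + 1) (by ring)
  obtain ⟨w, hw⟩ := exists_twistor_snoc_eq_mulVec Z (C * Z) B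
  have hZw (x : Fin n) : (Z *ᵥ (v (g 0) • w)) x = v (g 0) * v x := by
    rw [mulVec_smul, Pi.smul_apply, smul_eq_mul, ← hw]
  have hnonneg (s : Fin (k + (2 * r + 1) + 1)) :
      0 ≤ (-1) ^ (s : ℕ) * (Z *ᵥ (v (g 0) • w)) (F s) := by
    rw [hZw]
    obtain ⟨t, ht⟩ | ⟨b, hb⟩ := (Set.ext_iff.mp hrange (F s)).mp ⟨s, rfl⟩
    · obtain ⟨c, hc⟩ := hparity s t ht.symm
      rw [← ht, hc, pow_add, pow_mul, neg_one_sq, one_pow, mul_one]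
      exact (hsign t).le
    · simp [← hb, hvB]
  obtain ⟨s₀, hs₀⟩ : g 0 ∈ Set.range F := hrange ▸ Or.inl ⟨0, rfl⟩
  have := hZ.mulVec_eq_zero_of_alternating_nonneg hF hnonneg s₀
  rw [hZw, hs₀] at this
  simpa [this] using hsign 0

/-- For `m = 2r+1` odd, `Z` with positive maximal minors, `C` an arbitrary `k × n` matrix,
`Y = C Z`, and `B` a pair list of length `2r` (paper's `m − 1`), the sequence
`(⟨Y, B, i⟩)_{i ∈ [n]}` changes sign at most `k` times (ignoring zeros). -/
theorem stmt10 (k r n : ℕ) (hmn : k + (2 * r + 1) ≤ n)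
    (Z : Matrix (Fin n) (Fin (k + (2 * r + 1))) ℝ) (hZ : PosMaximalMinors Z)
    (C : Matrix (Fin k) (Fin n) ℝ)
    (B : Fin (2 * r) → Fin n) (hB : StrictMono B) (hpair : ConsecPairs B) :
    signFlips ((List.finRange n).map fun i => twistor Z (C * Z) (Fin.snoc B i)) ≤ k :=
  stmt10_general k r n Z hZ C B hB hpair
end

section
/- (m=2 sign-flip bound) Let k, n with k+2 ≤ n, Z an n×(k+2) matrix with positive maximal minors, and Y ∈ Gr(k, k+2) arbitrary (Y = CZ for some real k×n matrix C). Then the number of sign changes (ignoring zeros) of the sequence (⟨Y, 1, i⟩)_{i=2,...,n} is at most k. -/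
/-!
The twistor coordinate `i ↦ ⟨Y, 1, i⟩` is the linear functional `Z *ᵥ v` of the row `Z_i` for
some `v`, and it vanishes at `i = 1`. If it changed sign `k + 1` times along `2, …, n`, the index
`1` together with `k + 2` indices carrying alternating signs would give rows
`Z_{a_0}, …, Z_{a_{k+2}}`, `a_0 < ⋯ < a_{k+2}`, at which `(-1)^t ⟨Y, 1, a_t⟩` has constant sign
and is not identically zero. This contradicts the linear relation
`∑ₜ (-1)^t Δₜ Z_{a_t} = 0` among any `k + 3` rows, whose coefficients `Δₜ` are maximal minors of
`Z` and hence positive.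
-/

open Matrix

namespace Matrix

theorem det_updateRow_eq_sum_mul_adjugate {ι R : Type*} [Fintype ι] [DecidableEq ι] [CommRing R]
    (A : Matrix ι ι R) (r : ι) (u : ι → R) :
    (A.updateRow r u).det = ∑ c, u c * A.adjugate c r := by
  rw [det_eq_sum_mul_adjugate_row _ r]
  simp only [updateRow_self, adjugate_apply, updateRow_idem]

theorem vecMul_signed_minors_eq_zero {R : Type*} [CommRing R] {p : ℕ}
    (B : Matrix (Fin (p + 1)) (Fin p) R) :
    (fun i : Fin (p + 1) => (-1) ^ (i : ℕ) * (B.submatrix i.succAbove id).det) ᵥ* B = 0 := by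
  ext j
  -- expand along the first column a matrix whose first column repeats column `j` of `B`
  let M : Matrix (Fin (p + 1)) (Fin (p + 1)) R := of fun r => Fin.cons (B r j) (B r)
  have hM : M.det = 0 :=
    det_zero_of_column_eq (Fin.succ_ne_zero j).symm fun r => by simp [M]
  rw [det_succ_column_zero] at hM
  rw [vecMul, dotProduct, Pi.zero_apply, ← hM]
  refine Finset.sum_congr rfl fun i _ => ?_
  have : M.submatrix i.succAbove Fin.succ = B.submatrix i.succAbove id := by ext; simp [M]
  simp only [of_apply, Fin.cons_zero, this, M]
  ring

end Matrix

theorem PosMaximalMinors.mulVec_eq_zero_of_alternating {n p : ℕ} {Z : Matrix (Fin n) (Fin p) ℝ}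
    (hZ : PosMaximalMinors Z) (v : Fin p → ℝ) {a : Fin (p + 1) → Fin n} (ha : StrictMono a)
    (h : ∀ t : Fin (p + 1), 0 ≤ (-1) ^ (t : ℕ) * (Z *ᵥ v) (a t)) (t : Fin (p + 1)) :
    (Z *ᵥ v) (a t) = 0 := by
  set B := Z.submatrix a id
  set d : Fin (p + 1) → ℝ := fun i => (B.submatrix i.succAbove id).det with hd
  have hminor (i : Fin (p + 1)) : 0 < d i := hZ _ (ha.comp (Fin.strictMono_succAbove i))
  have hsum : ∑ i : Fin (p + 1), d i * ((-1) ^ (i : ℕ) * (Z *ᵥ v) (a i)) = 0 :=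
    calc _ = (fun i : Fin (p + 1) => (-1) ^ (i : ℕ) * d i) ⬝ᵥ (B *ᵥ v) :=
          Finset.sum_congr rfl fun i _ => by
            rw [show (B *ᵥ v) i = (Z *ᵥ v) (a i) from rfl]
            ring
      _ = 0 := by rw [dotProduct_mulVec, hd, vecMul_signed_minors_eq_zero, zero_dotProduct]
  rw [Finset.sum_eq_zero_iff_of_nonneg fun i _ => mul_nonneg (hminor i).le (h i)] at hsum
  simpa [(hminor t).ne'] using hsum t (Finset.mem_univ t)

theorem exists_twistor_eq_mulVec {k n : ℕ} (Z : Matrix (Fin n) (Fin (k + 2)) ℝ)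
    (Y : Matrix (Fin k) (Fin (k + 2)) ℝ) (a : Fin n) :
    ∃ v : Fin (k + 2) → ℝ, ∀ i, twistor Z Y ![a, i] = (Z *ᵥ v) i := by
  let A : Matrix (Fin k ⊕ Fin 2) (Fin k ⊕ Fin 2) ℝ :=
    of fun r c => Sum.elim (fun b => Y b) ![Z a, 0] r (finSumFinEquiv c)
  refine ⟨fun j => A.adjugate (finSumFinEquiv.symm j) (Sum.inr 1), fun i => ?_⟩
  have hA : twistor Z Y ![a, i] =
      (A.updateRow (Sum.inr 1) fun c => Z i (finSumFinEquiv c)).det := by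
    unfold twistor
    congr 1
    ext r c
    rcases r with r | r
    · rfl
    · fin_cases r <;> simp [A, updateRow_apply]
  rw [hA, det_updateRow_eq_sum_mul_adjugate, mulVec, dotProduct,
    ← finSumFinEquiv.sum_comp]
  simp

theorem twistor_self {k n : ℕ} (Z : Matrix (Fin n) (Fin (k + 2)) ℝ)
    (Y : Matrix (Fin k) (Fin (k + 2)) ℝ) (a : Fin n) :
    twistor Z Y ![a, a] = 0 :=
  det_zero_of_row_eq (i := Sum.inr 0) (j := Sum.inr 1) (by simp) (by ext; simp)

theorem List.IsChain.neg_one_pow_mul_head_mul_nonneg {s : List ℝ} (hs : s.IsChain (· * · < 0))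
    (i : ℕ) (hi : i < s.length) : (0 : ℝ) ≤ (-1 : ℝ) ^ i * (s[0] * s[i]) := by
  induction i with
  | zero => simpa using mul_self_nonneg s[0]
  | succ i ih =>
    have hstep : s[i] * s[i + 1] < 0 := List.isChain_iff_getElem.1 hs i hi
    have hsq : 0 < s[i] * s[i] := mul_self_pos.2 (left_ne_zero_of_mul hstep.ne)
    have : (-1 : ℝ) ^ (i + 1) * (s[0] * s[i + 1]) * (s[i] * s[i]) =
        -((-1 : ℝ) ^ i * (s[0] * s[i])) * (s[i] * s[i + 1]) := by ring
    refine nonneg_of_mul_nonneg_left ?_ hsq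
    rw [this]
    exact mul_nonneg_of_nonpos_of_nonpos (neg_nonpos.2 (ih (by omega))) hstep.le

theorem List.exists_cons_sublist_isChain_mul_neg (x : ℝ) (t : List ℝ) (h : ∀ a ∈ x :: t, a ≠ 0) :
    ∃ s, (x :: s).Sublist (x :: t) ∧
      s.length = ((x :: t).zip t).countP (fun q => q.1 * q.2 < 0) ∧
      (x :: s).IsChain (· * · < 0) := by
  induction t generalizing x with
  | nil => exact ⟨[], .refl _, rfl, isChain_singleton x⟩
  | cons y t ih =>
    obtain ⟨s, hsub, hlen, hchain⟩ := ih y fun a ha => h a (mem_cons_of_mem x ha)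
    by_cases hxy : x * y < 0
    · exact ⟨y :: s, hsub.cons_cons x, by simp [hxy, hlen], isChain_cons_cons.2 ⟨hxy, hchain⟩⟩
    · refine ⟨s, ((cons_sublist_cons.1 hsub).trans (sublist_cons_self y t)).cons_cons x,
        by simp [hxy, hlen], ?_⟩
      cases s with
      | nil => exact isChain_singleton x
      | cons z s =>
        obtain ⟨hyz, hchain⟩ := isChain_cons_cons.1 hchain
        have hy : y ≠ 0 := h y (by simp)
        have hxz : x * z * (y * y) < 0 := by
          rw [show x * z * (y * y) = x * y * (y * z) by ring]
          exact mul_neg_of_pos_of_neg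
            ((not_lt.1 hxy).lt_of_ne (mul_ne_zero (h x (by simp)) hy).symm) hyz
        exact isChain_cons_cons.2 ⟨neg_of_mul_neg_left hxz (mul_self_nonneg y), hchain⟩

theorem exists_sublist_isChain_of_lt_signFlips {l : List ℝ} {m : ℕ} (h : m < signFlips l) :
    ∃ s : List ℝ, s.Sublist l ∧ s.length = m + 2 ∧ s.IsChain (· * · < 0) := by
  cases hl : l.filter fun x => decide (x ≠ 0) with
  | nil =>
    simp only [signFlips, hl] at h
    simp at h
  | cons x t =>
    have hnz : ∀ a ∈ x :: t, a ≠ 0 := by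
      rw [← hl]
      intro a ha
      simpa using (List.mem_filter.1 ha).2
    obtain ⟨s, hsub, hlen, hchain⟩ := List.exists_cons_sublist_isChain_mul_neg x t hnz
    refine ⟨(x :: s).take (m + 2), (List.take_sublist _ _).trans
      (hsub.trans (hl ▸ List.filter_sublist)), ?_, hchain.take _⟩
    simp only [signFlips, hl, List.tail_cons] at h
    simp only [List.length_take, List.length_cons, hlen]
    omega

theorem List.pairwise_cons_zero_of_sublist_drop_one_finRange {n : ℕ} (hn : 0 < n)
    {L : List (Fin n)} (hL : L.Sublist ((finRange n).drop 1)) :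
    ((⟨0, hn⟩ : Fin n) :: L).Pairwise (· < ·) := by
  have hfin : (⟨0, hn⟩ : Fin n) :: (finRange n).drop 1 = finRange n := by
    have := getElem_cons_drop (as := finRange n) (i := 0) (by simpa using hn)
    rwa [getElem_finRange, drop_zero] at this
  exact (pairwise_lt_finRange n).sublist (hfin ▸ hL.cons_cons _)

/-- `m = 2` sign-flip bound: for `Z` an `n × (k+2)` matrix with positive maximal minors and
`Y = C Z` for an arbitrary real `k × n` matrix `C`, the sequence `(⟨Y, 1, i⟩)_{i = 2, …, n}`
changes sign at most `k` times (ignoring zeros). -/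
theorem stmt18 (k n : ℕ) (hmn : k + 2 ≤ n)
    (Z : Matrix (Fin n) (Fin (k + 2)) ℝ) (hZ : PosMaximalMinors Z)
    (C : Matrix (Fin k) (Fin n) ℝ) :
    signFlips (((List.finRange n).drop 1).map fun i =>
        twistor Z (C * Z) ![(⟨0, by omega⟩ : Fin n), i]) ≤ k := by
  set z0 : Fin n := ⟨0, by omega⟩
  by_contra! hlt
  obtain ⟨s, hsub, hlen, hchain⟩ := exists_sublist_isChain_of_lt_signFlips hlt
  obtain ⟨L, hL, hsL⟩ := List.sublist_map_iff.1 hsub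
  obtain ⟨v, hv⟩ := exists_twistor_eq_mulVec Z (C * Z) z0
  have hsorted := List.pairwise_cons_zero_of_sublist_drop_one_finRange (by omega) hL
  have hLlen : L.length = k + 2 := by simpa [hsL] using hlen
  let a : Fin (k + 3) → Fin n := fun t => (z0 :: L)[t.1]'(by simp [hLlen]; omega)
  have ha : StrictMono a := fun u w huw => List.pairwise_iff_getElem.1 hsorted _ _ _ _ huw
  have hw0 : (Z *ᵥ v) (a 0) = 0 := by simp [a, ← hv, twistor_self]
  have hw (i : Fin (k + 2)) : (Z *ᵥ v) (a i.succ) = s[i.1] := by simp [a, ← hv, hsL]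
  have hs0 : s[0] ≠ 0 := left_ne_zero_of_mul (List.isChain_iff_getElem.1 hchain 0 (by omega)).ne
  refine hs0 ?_
  have key := hZ.mulVec_eq_zero_of_alternating ((-s[0]) • v) ha ?_ (0 : Fin (k + 2)).succ
  · rw [mulVec_smul, Pi.smul_apply, hw] at key
    simpa using key
  refine Fin.cases ?_ fun i => ?_
  · rw [mulVec_smul, Pi.smul_apply, hw0, smul_zero, mul_zero]
  · rw [mulVec_smul, Pi.smul_apply, hw, smul_eq_mul, Fin.val_succ]
    convert hchain.neg_one_pow_mul_head_mul_nonneg i (by omega) using 1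
    ring
end
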